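/- arXiv:2510.06849 — 10 statements merged into one kernel-verified Lean document; each statement's English description precedes it below -/
import Mathlib

section
/- Let O be a quasi-temporal-transitive orientation (QTTO) of a temporal graph G. If O contains a directed cycle, then O contains a directed triangle whose three edges all have the same time-label. -/
def IsOrientation {V : Type*} (G : SimpleGraph V) (O : V → V → Prop) : Prop :=
  (∀ a b, O a b → G.Adj a b) ∧ (∀ a b, G.Adj a b → (O a b ↔ ¬ O b a))

def IsQTTO {V : Type*} (G : SimpleGraph V) (lam : V → V → ℕ) (O : V → V → Prop) : Prop :=
  IsOrientation G O ∧
    ∀ a b c, O a b → O b c → lam a b ≤ lam b c →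
      G.Adj a c ∧ lam b c ≤ lam a c ∧ (O a c ∨ O c a)

/-- `O` contains a directed cycle on `k ≥ 3` distinct vertices. -/
def HasDirCycle {V : Type*} (O : V → V → Prop) : Prop :=
  ∃ k : ℕ, 3 ≤ k ∧ ∃ v : ZMod k → V, Function.Injective v ∧ ∀ i, O (v i) (v (i + 1))

/-- `O` contains a monolabel directed triangle. -/
def HasMonoTriangle {V : Type*} (lam : V → V → ℕ) (O : V → V → Prop) : Prop :=
  ∃ a b c, O a b ∧ O b c ∧ O c a ∧ lam a b = lam b c ∧ lam b c = lam c a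

private lemma tri0 {V : Type*} {G : SimpleGraph V} {lam : V → V → ℕ} {O : V → V → Prop}
    (hsym : ∀ a b, lam a b = lam b a) (hq : IsQTTO G lam O)
    {a b c : V} (hab : O a b) (hbc : O b c) (hca : O c a)
    (h1 : lam a b ≤ lam b c) : HasMonoTriangle lam O := by
  obtain ⟨-, h2, -⟩ := hq.2 a b c hab hbc h1
  rw [hsym a c] at h2
  obtain ⟨-, h3, -⟩ := hq.2 b c a hbc hca h2
  rw [hsym b a] at h3
  exact ⟨a, b, c, hab, hbc, hca, le_antisymm h1 (h2.trans h3),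
    le_antisymm h2 (h3.trans h1)⟩

private lemma tri {V : Type*} {G : SimpleGraph V} {lam : V → V → ℕ} {O : V → V → Prop}
    (hsym : ∀ a b, lam a b = lam b a) (hq : IsQTTO G lam O)
    {a b c : V} (hab : O a b) (hbc : O b c) (hca : O c a) :
    HasMonoTriangle lam O := by
  rcases le_total (lam a b) (lam b c) with h | h
  · exact tri0 hsym hq hab hbc hca h
  rcases le_total (lam b c) (lam c a) with h' | h'
  · exact tri0 hsym hq hbc hca hab h'
  · exact tri0 hsym hq hca hab hbc (h'.trans h)

private lemma key {V : Type*} {G : SimpleGraph V} {lam : V → V → ℕ} {O : V → V → Prop}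
    (hsym : ∀ a b, lam a b = lam b a) (hq : IsQTTO G lam O) :
    ∀ k : ℕ, 3 ≤ k → ∀ v : ZMod k → V, Function.Injective v →
      (∀ i, O (v i) (v (i + 1))) → HasMonoTriangle lam O := by
  intro k
  induction k using Nat.strong_induction_on with
  | _ k IH =>
    intro hk v hv hcyc
    rcases eq_or_lt_of_le hk with h3 | h4
    · -- k = 3
      subst h3
      have h20 : (2 + 1 : ZMod 3) = 0 := by decide
      have e2 := hcyc 2
      rw [h20] at e2
      exact tri hsym hq (hcyc 0) (hcyc 1) e2
    · -- k ≥ 4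
      have hk4 : 4 ≤ k := h4
      haveI : NeZero k := ⟨by omega⟩
      haveI : NeZero (k - 1) := ⟨by omega⟩
      -- find i₀ with nondecreasing consecutive labels
      have hex : ∃ i : ZMod k, lam (v i) (v (i + 1)) ≤ lam (v (i + 1)) (v (i + 1 + 1)) := by
        by_contra hno
        push_neg at hno
        set g : ℕ → ℕ := fun n => lam (v (n : ZMod k)) (v ((n : ZMod k) + 1)) with hg
        have hlt : ∀ n, g (n + 1) < g n := by
          intro n
          have := hno (n : ZMod k)
          simpa [hg, Nat.cast_add, Nat.cast_one] using this
        have hanti : StrictAnti g := strictAnti_nat_of_succ_lt hlt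
        have h1 : g k < g 0 := hanti (by omega)
        have h2 : g k = g 0 := by simp [hg, ZMod.natCast_self]
        omega
      obtain ⟨i₀, hle⟩ := hex
      obtain ⟨-, -, hor⟩ := hq.2 (v i₀) (v (i₀ + 1)) (v (i₀ + 1 + 1)) (hcyc i₀) (hcyc (i₀ + 1)) hle
      rcases hor with hchord | hback
      · -- shorter cycle of length k - 1
        set w : ZMod (k - 1) → V := fun j => v ((j.val : ZMod k) + i₀ + 2) with hw
        have hwinj : Function.Injective w := by
          intro j1 j2 h
          have h' := hv h
          have h'' : ((j1.val : ℕ) : ZMod k) = ((j2.val : ℕ) : ZMod k) := by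
            have := add_right_cancel (add_right_cancel h')
            exact this
          have hv1 : j1.val < k := lt_of_lt_of_le (ZMod.val_lt j1) (by omega)
          have hv2 : j2.val < k := lt_of_lt_of_le (ZMod.val_lt j2) (by omega)
          have : j1.val = j2.val := by
            have e1 := ZMod.val_cast_of_lt hv1
            have e2 := ZMod.val_cast_of_lt hv2
            rw [← e1, ← e2, h'']
          exact ZMod.val_injective (k - 1) this
        have hwcyc : ∀ j : ZMod (k - 1), O (w j) (w (j + 1)) := by
          intro j
          have hjlt : j.val < k - 1 := ZMod.val_lt j
          rcases eq_or_lt_of_le (Nat.le_of_lt_succ (by omega : j.val < (k - 2) + 1))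
            with hlast | hmid
          · -- j.val = k - 2 : wraparound edge, use the chord
            have hj1 : (j + 1).val = 0 := by
              rw [ZMod.val_add, ZMod.val_one_eq_one_mod, hlast]
              have : 1 % (k - 1) = 1 := Nat.mod_eq_of_lt (by omega)
              rw [this]
              have : k - 2 + 1 = k - 1 := by omega
              rw [this, Nat.mod_self]
            have e1 : w j = v i₀ := by
              show v ((j.val : ZMod k) + i₀ + 2) = v i₀
              rw [hlast]
              congr 1
              have : ((k - 2 : ℕ) : ZMod k) + i₀ + 2 = i₀ + (((k - 2 : ℕ) : ZMod k) + 2) := by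
                ring
              rw [this]
              have h0 : ((k - 2 : ℕ) : ZMod k) + 2 = 0 := by
                have : ((k - 2 : ℕ) : ZMod k) + 2 = ((k - 2 + 2 : ℕ) : ZMod k) := by
                  push_cast; ring
                rw [this]
                have : k - 2 + 2 = k := by omega
                rw [this, ZMod.natCast_self]
              rw [h0, add_zero]
            have e2 : w (j + 1) = v (i₀ + 2) := by
              show v (((j + 1).val : ZMod k) + i₀ + 2) = v (i₀ + 2)
              rw [hj1]
              push_cast
              ring_nf
            rw [e1, e2]
            have : (2 : ZMod k) = 1 + 1 := by ring
            rw [this, ← add_assoc]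
            exact hchord
          · -- middle edge
            have hj1 : (j + 1).val = j.val + 1 := by
              rw [ZMod.val_add, ZMod.val_one_eq_one_mod]
              have h1m : 1 % (k - 1) = 1 := Nat.mod_eq_of_lt (by omega)
              rw [h1m]
              exact Nat.mod_eq_of_lt (by omega)
            have e2 : w (j + 1) = v (((j.val : ZMod k) + i₀ + 2) + 1) := by
              show v (((j + 1).val : ZMod k) + i₀ + 2) = v (((j.val : ZMod k) + i₀ + 2) + 1)
              rw [hj1]
              congr 1
              push_cast
              ring
            rw [e2]
            exact hcyc _
        exact IH (k - 1) (by omega) (by omega) w hwinj hwcyc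
      · -- back chord: directed triangle
        exact tri hsym hq (hcyc i₀) (hcyc (i₀ + 1)) hback

theorem stmt0 {V : Type*} [Fintype V] (G : SimpleGraph V) (lam : V → V → ℕ)
    (hsym : ∀ a b, lam a b = lam b a) (O : V → V → Prop)
    (hq : IsQTTO G lam O) (hc : HasDirCycle O) :
    HasMonoTriangle lam O := by
  obtain ⟨k, hk, v, hv, hcyc⟩ := hc
  exact key hsym hq k hk v hv hcyc
end

section
/- An orientation O of a temporal graph G is a temporal transitive orientation (TTO) if and only if O is a quasi-temporal-transitive orientation (QTTO) containing no monolabel directed triangle. -/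
def IsTTO {V : Type*} (G : SimpleGraph V) (lam : V → V → ℕ) (O : V → V → Prop) : Prop :=
  IsOrientation G O ∧
    ∀ a b c, O a b → O b c → lam a b ≤ lam b c → O a c ∧ lam b c ≤ lam a c

theorem stmt1 {V : Type*} [Fintype V] (G : SimpleGraph V) (lam : V → V → ℕ)
    (hsym : ∀ a b, lam a b = lam b a) (O : V → V → Prop) :
    IsTTO G lam O ↔ (IsQTTO G lam O ∧ ¬ HasMonoTriangle lam O) := by
  constructor
  · rintro ⟨hO, hT⟩
    refine ⟨⟨hO, fun a b c hab hbc hle => ?_⟩, ?_⟩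
    · obtain ⟨hac, hlam⟩ := hT a b c hab hbc hle
      exact ⟨hO.1 a c hac, hlam, Or.inl hac⟩
    · rintro ⟨a, b, c, hab, hbc, hca, h1, h2⟩
      obtain ⟨hac, _⟩ := hT a b c hab hbc h1.le
      exact ((hO.2 a c (hO.1 a c hac)).mp hac) hca
  · rintro ⟨⟨hO, hQ⟩, hM⟩
    refine ⟨hO, fun a b c hab hbc hle => ?_⟩
    obtain ⟨hadj, hlam, hor⟩ := hQ a b c hab hbc hle
    refine ⟨?_, hlam⟩
    rcases hor with h | hca
    · exact h
    · exfalso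
      obtain ⟨_, hlam2, _⟩ := hQ b c a hbc hca (by rw [hsym c a]; exact hlam)
      have e1 : lam a b = lam b c := le_antisymm hle
        (calc lam b c ≤ lam a c := hlam
          _ = lam c a := hsym a c
          _ ≤ lam b a := hlam2
          _ = lam a b := hsym b a)
      have e2 : lam b c = lam c a := le_antisymm (by rw [← hsym a c]; exact hlam)
        (by calc lam c a ≤ lam b a := hlam2
              _ = lam a b := hsym b a
              _ ≤ lam b c := hle)
      exact hM ⟨a, b, c, hab, hbc, hca, e1, e2⟩
end

section
/- Every temporal transitive orientation (TTO) of a temporal graph is acyclic, i.e., contains no directed cycle. -/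
/-- In a TTO there is no periodic infinite directed walk with positive period. -/
lemma no_periodic_walk {V : Type*} (G : SimpleGraph V) (lam : V → V → ℕ)
    (O : V → V → Prop) (h : IsTTO G lam O) :
    ∀ n, 1 ≤ n → ∀ W : ℕ → V, (∀ m, W (m + n) = W m) →
      (∀ m, O (W m) (W (m + 1))) → False := by
  have hirr : ∀ a, O a a → False := fun a ha => (h.1.1 a a ha).ne rfl
  intro n
  induction n using Nat.strong_induction_on with
  | _ n ih =>
    intro hn W hper hedge
    -- handle n = 1
    rcases Nat.lt_or_ge n 2 with h1 | h2
    · have hn1 : n = 1 := by omega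
      subst hn1
      have := hedge 0
      rw [show (0:ℕ) + 1 = 0 + 1 from rfl, hper 0] at this
      exact hirr _ this
    -- general periodicity in both directions
    have hperk : ∀ q m, W (m + q * n) = W m := by
      intro q
      induction q with
      | zero => simp
      | succ q ihq =>
        intro m
        have : m + (q + 1) * n = (m + q * n) + n := by ring
        rw [this, hper, ihq]
    have hmod : ∀ a, W (a % n) = W a := by
      intro a
      rw [← hperk (a / n) (a % n)]
      congr 1
      have := Nat.mod_add_div' a n
      omega
    -- pick an index with minimal label
    set l : ℕ → ℕ := fun i => lam (W i) (W (i + 1)) with hl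
    obtain ⟨i₀, hi₀mem, hmin⟩ :=
      (Finset.range n).exists_min_image l ⟨0, Finset.mem_range.2 (by omega)⟩
    have hi₀ : i₀ < n := Finset.mem_range.1 hi₀mem
    have hlmod : ∀ a, l (a % n) = l a := by
      intro a
      have h1 : W (a % n) = W a := hmod a
      have h2 : W (a % n + 1) = W (a + 1) := by
        rw [← hperk (a / n) (a % n + 1)]
        congr 1
        have := Nat.mod_add_div' a n
        omega
      simp only [hl, h1, h2]
    have hmin' : l i₀ ≤ l (i₀ + 1) := by
      rw [← hlmod (i₀ + 1)]
      exact hmin _ (Finset.mem_range.2 (Nat.mod_lt _ (by omega)))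
    -- shortcut
    have hshort := h.2 (W i₀) (W (i₀ + 1)) (W (i₀ + 2))
      (hedge i₀) (hedge (i₀ + 1)) hmin'
    rcases Nat.lt_or_ge n 3 with h3 | h3
    · -- n = 2 : shortcut is a loop
      have hn2 : n = 2 := by omega
      have : W (i₀ + 2) = W i₀ := by rw [← hn2]; exact hper i₀
      rw [this] at hshort
      exact hirr _ hshort.1
    · -- n ≥ 3 : build a periodic walk of period n - 1
      set W' : ℕ → V := fun m => W (m + i₀) with hW'
      have hedge' : ∀ m, O (W' m) (W' (m + 1)) := by
        intro m
        have := hedge (m + i₀)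
        simp only [hW']
        have harith : m + 1 + i₀ = m + i₀ + 1 := by omega
        rw [harith]
        exact this
      set v : ℕ → V := fun m =>
        if m % (n - 1) = 0 then W' 0 else W' (m % (n - 1) + 1) with hv
      apply ih (n - 1) (by omega) (by omega) v
      · intro m
        simp only [hv, Nat.add_mod_right]
      · intro m
        set r := m % (n - 1) with hr
        have hrlt : r < n - 1 := Nat.mod_lt _ (by omega)
        have hm1 : (m + 1) % (n - 1) = (r + 1) % (n - 1) := by
          rw [Nat.add_mod, ← hr, Nat.mod_eq_of_lt (show 1 < n - 1 by omega)]
        rcases Nat.lt_or_ge (r + 1) (n - 1) with hcase | hcase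
        · -- (m+1) % (n-1) = r + 1 ≠ 0
          have hm1' : (m + 1) % (n - 1) = r + 1 := by
            rw [hm1, Nat.mod_eq_of_lt hcase]
          rcases Nat.eq_zero_or_pos r with hr0 | hrpos
          · -- shortcut edge
            simp only [hv, ← hr, hm1', hr0]
            simp only [Nat.zero_add, if_pos rfl, if_neg (by omega : (1:ℕ) + 1 ≠ 0)]
            simp only [hW', Nat.zero_add]
            have harith : 1 + 1 + i₀ = i₀ + 2 := by omega
            rw [harith]
            exact hshort.1
          · simp only [hv, ← hr, hm1', if_neg (by omega : r ≠ 0),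
              if_neg (by omega : r + 1 ≠ 0)]
            have := hedge' (r + 1)
            exact this
        · -- wrap-around : r + 1 = n - 1
          have hreq : r + 1 = n - 1 := by omega
          have hm1' : (m + 1) % (n - 1) = 0 := by
            rw [hm1, hreq, Nat.mod_self]
          have hrne : r ≠ 0 := by omega
          simp only [hv, ← hr, hm1', if_neg hrne, if_pos rfl]
          have := hedge' (r + 1)
          have hW'n : W' (r + 1 + 1) = W' 0 := by
            simp only [hW', Nat.zero_add]
            have harith : r + 1 + 1 + i₀ = i₀ + n := by omega
            rw [harith, Nat.add_comm i₀ n, Nat.add_comm]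
            exact hper i₀
          rw [hW'n] at this
          exact this

theorem stmt2 {V : Type*} [Fintype V] (G : SimpleGraph V) (lam : V → V → ℕ)
    (hsym : ∀ a b, lam a b = lam b a) (O : V → V → Prop)
    (h : IsTTO G lam O) : ¬ HasDirCycle O := by
  rintro ⟨k, hk3, v, hinj, hcyc⟩
  apply no_periodic_walk G lam O h k (by omega) (fun m => v (m : ZMod k))
  · intro m
    push_cast [ZMod.natCast_self]
    ring_nf
  · intro m
    have := hcyc (m : ZMod k)
    push_cast
    exact this
end

section
/- A proper temporal graph admits a temporal transitive orientation (TTO) if and only if it admits a quasi-temporal-transitive orientation (QTTO). -/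
/-- A temporal graph is proper if distinct edges sharing an endpoint have distinct labels. -/
def IsProper {V : Type*} (G : SimpleGraph V) (lam : V → V → ℕ) : Prop :=
  ∀ a b c, G.Adj b a → G.Adj b c → a ≠ c → lam b a ≠ lam b c

theorem stmt3 {V : Type*} [Fintype V] (G : SimpleGraph V) (lam : V → V → ℕ)
    (hsym : ∀ a b, lam a b = lam b a) (hproper : IsProper G lam) :
    (∃ O : V → V → Prop, IsTTO G lam O) ↔ (∃ O : V → V → Prop, IsQTTO G lam O) := by
  constructor
  · rintro ⟨O, hO, htto⟩
    refine ⟨O, hO, fun a b c hab hbc hle => ?_⟩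
    obtain ⟨hac, hlac⟩ := htto a b c hab hbc hle
    exact ⟨hO.1 a c hac, hlac, Or.inl hac⟩
  · rintro ⟨O, hO, hq⟩
    refine ⟨O, hO, fun a b c hab hbc hle => ?_⟩
    obtain ⟨hadj, hlac, hor⟩ := hq a b c hab hbc hle
    rcases hor with h | hca
    · exact ⟨h, hlac⟩
    · -- derive contradiction from O c a
      exfalso
      have hle2 : lam b c ≤ lam c a := by rw [hsym c a]; exact hlac
      obtain ⟨hadj2, hlba, _⟩ := hq b c a hbc hca hle2
      -- lam c a ≤ lam b a, lam a b ≤ lam b c ≤ lam c a ≤ lam b a = lam a b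
      have e1 : lam a b = lam b c := le_antisymm hle (by
        calc lam b c ≤ lam c a := hle2
          _ ≤ lam b a := hlba
          _ = lam a b := (hsym a b).symm)
      have hadjab : G.Adj a b := hO.1 a b hab
      have hadjbc : G.Adj b c := hO.1 b c hbc
      exact hproper a b c hadjab.symm hadjbc hadj.ne (by rw [hsym b a]; exact e1)
end

section
/- If (a,b,c,d) is a correlated monolabel triangle in a temporal graph G, then in the implication digraph Imp(G) there is a directed path from (b,c) to (a,b), namely (b,c) → (d,c) → (d,b) → (a,b). Consequently, in any TTO of G, if (b,c) is an arc then so is (a,b). -/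
/-- Arc of the implication digraph `Imp(G)`. -/
def ImpArc {V : Type*} (G : SimpleGraph V) (lam : V → V → ℕ) (p q : V × V) : Prop :=
  ∃ a b c, G.Adj a b ∧ G.Adj b c ∧ lam a b ≤ lam b c ∧
    (¬ G.Adj a c ∨ lam a c < lam b c) ∧
    ((p = (a, b) ∧ q = (c, b)) ∨ (p = (b, c) ∧ q = (b, a)))

/-- `(a,b,c,d)` is a correlated monolabel triangle with common label `t`. -/
def CorrTri {V : Type*} (G : SimpleGraph V) (lam : V → V → ℕ) (a b c d : V) (t : ℕ) : Prop :=
  G.Adj a b ∧ G.Adj b c ∧ G.Adj c a ∧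
    lam a b = t ∧ lam b c = t ∧ lam c a = t ∧
    G.Adj b d ∧ lam b d ≤ t ∧ G.Adj c d ∧ t < lam c d ∧
    (G.Adj a d → lam a d < t)

/-- Arc of the augmented implication digraph `Aug(G)`. -/
def AugArc {V : Type*} (G : SimpleGraph V) (lam : V → V → ℕ) (p q : V × V) : Prop :=
  ImpArc G lam p q ∨
    ∃ a b c d t, CorrTri G lam a b c d t ∧
      ((p = (b, c) ∧ q = (a, c)) ∨ (p = (c, a) ∧ q = (c, b)))

/-- `p` forces `q`: directed path (possibly empty) from `p` to `q` in `Aug(G)`. -/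
def Forces {V : Type*} (G : SimpleGraph V) (lam : V → V → ℕ) : V × V → V × V → Prop :=
  Relation.ReflTransGen (AugArc G lam)

/-- The set of necessary arcs of `G`. -/
def Ness {V : Type*} (G : SimpleGraph V) (lam : V → V → ℕ) : Set (V × V) :=
  {p | G.Adj p.1 p.2 ∧ Forces G lam (p.2, p.1) p}

/-- Almost-temporal transitive orientation. -/
def IsATTO {V : Type*} (G : SimpleGraph V) (lam : V → V → ℕ) (O : V → V → Prop) : Prop :=
  IsOrientation G O ∧ ∀ p q, O p.1 p.2 → Forces G lam p q → O q.1 q.2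

theorem stmt7 {V : Type*} [Fintype V] (G : SimpleGraph V) (lam : V → V → ℕ)
    (hsym : ∀ a b, lam a b = lam b a) (a b c d : V) (t : ℕ)
    (hdist : a ≠ b ∧ a ≠ c ∧ a ≠ d ∧ b ≠ c ∧ b ≠ d ∧ c ≠ d)
    (hcorr : CorrTri G lam a b c d t) :
    ImpArc G lam (b, c) (d, c) ∧ ImpArc G lam (d, c) (d, b) ∧
      ImpArc G lam (d, b) (a, b) ∧
      ∀ O : V → V → Prop, IsTTO G lam O → O b c → O a b := by
  obtain ⟨hab, hbc, hca, lab, lbc, lca, hbd, lbd, hcd, lcd, had⟩ := hcorr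
  refine ⟨?_, ?_, ?_, ?_⟩
  · exact ⟨b, c, d, hbc, hcd, by omega, Or.inr (by omega),
      Or.inl ⟨rfl, rfl⟩⟩
  · exact ⟨b, d, c, hbd, hcd.symm, by rw [hsym d c]; omega,
      Or.inr (by rw [hsym d c]; omega), Or.inr ⟨rfl, rfl⟩⟩
  · refine ⟨d, b, a, hbd.symm, hab.symm, by rw [hsym d b, hsym b a]; omega, ?_,
      Or.inl ⟨rfl, rfl⟩⟩
    by_cases h : G.Adj d a
    · exact Or.inr (by have := had h.symm; rw [hsym d a, hsym b a]; omega)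
    · exact Or.inl h
  · rintro O ⟨⟨hO1, hO2⟩, hT⟩ hObc
    have hOdc : O d c := by
      by_contra h
      have hOcd : O c d := (hO2 c d hcd).mpr h
      obtain ⟨_, hle⟩ := hT b c d hObc hOcd (by omega)
      omega
    have hOdb : O d b := by
      by_contra h
      have hObd : O b d := (hO2 b d hbd).mpr h
      obtain ⟨_, hle⟩ := hT b d c hObd hOdc (by rw [hsym d c]; omega)
      rw [hsym d c] at hle; omega
    by_contra h
    have hOba : O b a := (hO2 b a hab.symm).mpr h
    obtain ⟨hOda, hle⟩ := hT d b a hOdb hOba (by rw [hsym d b, hsym b a]; omega)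
    have hda : G.Adj d a := hO1 d a hOda
    have := had hda.symm
    rw [hsym b a] at hle
    rw [hsym d a] at hle
    omega
end

section
/- If (a,b,c,d) is a correlated monolabel triangle in a temporal graph G and O is an ATTO of G, then the triangle abc is not cyclically oriented (directed) in O. -/
theorem stmt9 {V : Type*} [Fintype V] (G : SimpleGraph V) (lam : V → V → ℕ)
    (hsym : ∀ a b, lam a b = lam b a) (O : V → V → Prop)
    (hatto : IsATTO G lam O) (a b c d : V) (t : ℕ)
    (hcorr : CorrTri G lam a b c d t) :
    ¬ ((O a b ∧ O b c ∧ O c a) ∨ (O b a ∧ O c b ∧ O a c)) := by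
  obtain ⟨hor, hforce⟩ := hatto
  obtain ⟨hab, hbc, hca, lab, lbc, lca, hbd, lbd, hcd, lcd, had⟩ := hcorr
  rintro (⟨h1, h2, h3⟩ | ⟨h1, h2, h3⟩)
  · -- O a b, O b c, O c a : aug arc (b,c) → (a,c)
    have hac : O a c := hforce (b, c) (a, c) h2
      (Relation.ReflTransGen.single (Or.inr
        ⟨a, b, c, d, t, ⟨hab, hbc, hca, lab, lbc, lca, hbd, lbd, hcd, lcd, had⟩,
          Or.inl ⟨rfl, rfl⟩⟩))
    exact ((hor.2 a c hca.symm).mp hac) h3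
  · -- O b a, O c b, O a c : chain (a,c) → (d,c) → (d,b) → (a,b)
    have s1 : O d c := hforce (a, c) (d, c) h3
      (Relation.ReflTransGen.single (Or.inl
        ⟨a, c, d, hca.symm, hcd, by rw [hsym a c, lca]; omega,
          ((em (G.Adj a d)).elim (fun h => Or.inr ((had h).trans lcd)) Or.inl),
          Or.inl ⟨rfl, rfl⟩⟩))
    have s2 : O d b := hforce (d, c) (d, b) s1
      (Relation.ReflTransGen.single (Or.inl
        ⟨b, d, c, hbd, hcd.symm, by rw [hsym d c]; omega,
          Or.inr (by rw [hsym d c]; omega),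
          Or.inr ⟨rfl, rfl⟩⟩))
    have s3 : O a b := hforce (d, b) (a, b) s2
      (Relation.ReflTransGen.single (Or.inl
        ⟨d, b, a, hbd.symm, hab.symm, by rw [hsym d b, hsym b a]; omega,
          ((em (G.Adj a d)).elim (fun h => Or.inr (by rw [hsym d a, hsym b a]; exact lt_of_lt_of_le (had h) lab.ge)) (fun h => Or.inl fun hda => h hda.symm)),
          Or.inl ⟨rfl, rfl⟩⟩))
    exact ((hor.2 a b hab).mp s3) h1
end

section
/- Let O be a partial ATTO of a temporal graph G (a partial orientation with O ∩ Oᴿ = ∅ and O⁺ = O) containing Ness(G), and let ab be an edge of G with neither (a,b) nor (b,a) in O. Then O' = O ∪ {(a,b)}⁺ satisfies O' ∩ O'ᴿ = ∅ and O'⁺ = O', i.e., O' is again a partial ATTO. -/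
lemma augArc_skew {V : Type*} (G : SimpleGraph V) (lam : V → V → ℕ) {p q : V × V}
    (h : AugArc G lam p q) : AugArc G lam (q.2, q.1) (p.2, p.1) := by
  rcases h with ⟨x, y, z, h1, h2, h3, h4, h5 | h5⟩ | ⟨x, y, z, d, t, hct, h5 | h5⟩
  · exact Or.inl ⟨x, y, z, h1, h2, h3, h4, Or.inr (by simp [h5.1, h5.2])⟩
  · exact Or.inl ⟨x, y, z, h1, h2, h3, h4, Or.inl (by simp [h5.1, h5.2])⟩
  · exact Or.inr ⟨x, y, z, d, t, hct, Or.inr (by simp [h5.1, h5.2])⟩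
  · exact Or.inr ⟨x, y, z, d, t, hct, Or.inl (by simp [h5.1, h5.2])⟩

lemma forces_skew {V : Type*} (G : SimpleGraph V) (lam : V → V → ℕ) {p q : V × V}
    (h : Forces G lam p q) : Forces G lam (q.2, q.1) (p.2, p.1) := by
  induction h with
  | refl => exact Relation.ReflTransGen.refl
  | tail _ harc ih => exact Relation.ReflTransGen.head (augArc_skew G lam harc) ih

theorem stmt15 {V : Type*} [Fintype V] (G : SimpleGraph V) (lam : V → V → ℕ)
    (hsym : ∀ a b, lam a b = lam b a) (O : Set (V × V))
    (hedge : ∀ p ∈ O, G.Adj p.1 p.2)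
    (hrev : ∀ p ∈ O, (p.2, p.1) ∉ O)
    (hclosed : ∀ p ∈ O, ∀ q, Forces G lam p q → q ∈ O)
    (hness : Ness G lam ⊆ O)
    (a b : V) (hab : G.Adj a b) (h1 : (a, b) ∉ O) (h2 : (b, a) ∉ O) :
    (∀ p ∈ O ∪ {q | Forces G lam (a, b) q}, (p.2, p.1) ∉ O ∪ {q | Forces G lam (a, b) q}) ∧
      (∀ p ∈ O ∪ {q | Forces G lam (a, b) q}, ∀ q, Forces G lam p q →
        q ∈ O ∪ {q | Forces G lam (a, b) q}) := by
  constructor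
  · rintro p (hp | hp) (hq | hq)
    · exact hrev p hp hq
    · exact h2 (hclosed p hp _ ((forces_skew G lam hq).trans Relation.ReflTransGen.refl))
    · exact h2 (hclosed _ hq _ (forces_skew G lam hp))
    · exact h2 (hness ⟨hab.symm, hp.trans (forces_skew G lam hq)⟩)
  · rintro p (hp | hp) q hpq
    · exact Or.inl (hclosed p hp q hpq)
    · exact Or.inr (hp.trans hpq)
end

section
/- A temporal graph G = (G, λ) admits a temporal transitive orientation if and only if there exists a linear order σ on its vertices such that for every triple a ≺_σ b ≺_σ c with ab ∈ E, bc ∈ E and λ(ab) ≤ λ(bc), the edge ac exists and satisfies λ(ac) ≥ λ(bc). -/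
open Relation

section

variable {V : Type*}

theorem exists_isStrictTotalOrder_le_of_acyclic (O : V → V → Prop)
    (hO : ∀ x, ¬ TransGen O x x) :
    ∃ lt : V → V → Prop, IsStrictTotalOrder V lt ∧ O ≤ lt := by
  let _ : IsStrictOrder V (TransGen O) := { irrefl := hO, trans := fun _ _ _ => TransGen.trans }
  let _ := partialOrderOfSO (TransGen O)
  have hinj : Function.Injective (toLinearExtension : V →o LinearExtension V) := fun _ _ h => h
  have hf : StrictMono (toLinearExtension : V →o LinearExtension V) :=
    toLinearExtension.monotone.strictMono_of_injective hinj
  exact ⟨Function.onFun (· < ·) toLinearExtension, hinj.isStrictTotalOrder_onFun _,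
    fun a b hab => hf (TransGen.single hab)⟩

variable {G : SimpleGraph V} {lam : V → V → ℕ} {O : V → V → Prop}

def arcsUpTo (O : V → V → Prop) (lam : V → V → ℕ) (L : ℕ) (u v : V) : Prop :=
  O u v ∧ lam u v ≤ L

theorem arcsUpTo_mono {L L' : ℕ} (h : L ≤ L') : arcsUpTo O lam L ≤ arcsUpTo O lam L' :=
  fun _ _ huv => ⟨huv.1, huv.2.trans h⟩

theorem Relation.TransGen.exists_max_arc {x y : V} (h : TransGen O x y) :
    ∃ b a, O b a ∧ ReflTransGen (arcsUpTo O lam (lam b a)) x b ∧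
      ReflTransGen (arcsUpTo O lam (lam b a)) a y := by
  induction h with
  | single hxy => exact ⟨_, _, hxy, .refl, .refl⟩
  | @tail y z _ hyz ih =>
    obtain ⟨b, a, hba, hxb, hay⟩ := ih
    rcases le_total (lam y z) (lam b a) with hle | hle
    · exact ⟨b, a, hba, hxb, hay.tail ⟨hyz, hle⟩⟩
    · have hxy : ReflTransGen (arcsUpTo O lam (lam b a)) x y :=
        (hxb.tail ⟨hba, le_rfl⟩).trans hay
      exact ⟨y, z, hyz, ReflTransGen.mono (arcsUpTo_mono hle) _ _ hxy, .refl⟩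

namespace IsTTO

theorem irrefl (h : IsTTO G lam O) (a : V) : ¬ O a a :=
  fun haa => G.irrefl (h.1.1 a a haa)

theorem not_arc_of_reflTransGen (h : IsTTO G lam O) {L : ℕ} {a b : V}
    (hab : ReflTransGen (arcsUpTo O lam L) a b) (hL : L ≤ lam b a) : ¬ O b a := by
  induction hab with
  | refl => exact h.irrefl a
  | @tail p b _ hpb ih =>
    intro hba
    obtain ⟨hpa, hle⟩ := h.2 p b a hpb.1 hba (hpb.2.trans hL)
    exact ih (hL.trans hle) hpa

theorem transGen_irrefl (h : IsTTO G lam O) (x : V) : ¬ TransGen O x x := fun hx =>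
  let ⟨_, _, hba, hxb, hax⟩ := hx.exists_max_arc (lam := lam)
  h.not_arc_of_reflTransGen (hax.trans hxb) le_rfl hba

theorem exists_isStrictTotalOrder (h : IsTTO G lam O) :
    ∃ lt : V → V → Prop, IsStrictTotalOrder V lt ∧
      ∀ a b c, lt a b → lt b c → G.Adj a b → G.Adj b c → lam a b ≤ lam b c →
        G.Adj a c ∧ lam b c ≤ lam a c := by
  obtain ⟨lt, hlt, hOlt⟩ := exists_isStrictTotalOrder_le_of_acyclic O h.transGen_irrefl
  have harc : ∀ a b, lt a b → G.Adj a b → O a b := fun a b hab hadj =>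
    by_contra fun hnab => asymm hab (hOlt b a ((h.1.2 a b hadj).not_left.mp hnab))
  refine ⟨lt, hlt, fun a b c hab hbc hadjab hadjbc hle => ?_⟩
  obtain ⟨hac, hlac⟩ := h.2 a b c (harc a b hab hadjab) (harc b c hbc hadjbc) hle
  exact ⟨h.1.1 a c hac, hlac⟩

end IsTTO

theorem isTTO_adj_and_lt (lt : V → V → Prop) [IsStrictTotalOrder V lt]
    (hlt : ∀ a b c, lt a b → lt b c → G.Adj a b → G.Adj b c → lam a b ≤ lam b c →
      G.Adj a c ∧ lam b c ≤ lam a c) :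
    IsTTO G lam fun a b => G.Adj a b ∧ lt a b := by
  refine ⟨⟨fun a b h => h.1, fun a b hadj => ?_⟩, ?_⟩
  · refine ⟨fun ⟨_, hab⟩ ⟨_, hba⟩ => asymm hab hba, fun hnba => ⟨hadj, ?_⟩⟩
    rcases trichotomous_of lt a b with hab | rfl | hba
    · exact hab
    · exact (G.irrefl hadj).elim
    · exact (hnba ⟨hadj.symm, hba⟩).elim
  · rintro a b c ⟨hadjab, hab⟩ ⟨hadjbc, hbc⟩ hle
    obtain ⟨hadjac, hlac⟩ := hlt a b c hab hbc hadjab hadjbc hle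
    exact ⟨⟨hadjac, _root_.trans hab hbc⟩, hlac⟩

end

theorem stmt16_general {V : Type*} (G : SimpleGraph V) (lam : V → V → ℕ) :
    (∃ O : V → V → Prop, IsTTO G lam O) ↔
      ∃ lt : V → V → Prop, IsStrictTotalOrder V lt ∧
        ∀ a b c, lt a b → lt b c → G.Adj a b → G.Adj b c → lam a b ≤ lam b c →
          G.Adj a c ∧ lam b c ≤ lam a c :=
  ⟨fun ⟨_, hO⟩ => hO.exists_isStrictTotalOrder,
    fun ⟨lt, _, hlt⟩ => ⟨_, isTTO_adj_and_lt lt hlt⟩⟩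

theorem stmt16 {V : Type*} [Fintype V] (G : SimpleGraph V) (lam : V → V → ℕ)
    (hsym : ∀ a b, lam a b = lam b a) :
    (∃ O : V → V → Prop, IsTTO G lam O) ↔
      ∃ lt : V → V → Prop, IsStrictTotalOrder V lt ∧
        ∀ a b c, lt a b → lt b c → G.Adj a b → G.Adj b c → lam a b ≤ lam b c →
          G.Adj a c ∧ lam b c ≤ lam a c :=
  stmt16_general G lam
end

section
/- Let O be a strict TTO of a temporal graph, let S be a strongly connected component of O with common edge label t₁, and let (v,w) ∈ O with v ∈ S, w ∉ S and λ(vw) = t₂ > t₁. Then for every vertex u ∈ S with u ≠ v, the arc (u,w) belongs to O and λ(uw) = t₂. -/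
def IsStrictTTO {V : Type*} (G : SimpleGraph V) (lam : V → V → ℕ) (O : V → V → Prop) : Prop :=
  IsOrientation G O ∧
    ∀ a b c, O a b → O b c → lam a b < lam b c → O a c ∧ lam b c ≤ lam a c

theorem stmt18 {V : Type*} [Fintype V] (G : SimpleGraph V) (lam : V → V → ℕ)
    (hsym : ∀ a b, lam a b = lam b a) (O : V → V → Prop)
    (h : IsStrictTTO G lam O) (S : Set V) (t₁ t₂ : ℕ)
    (hconn : ∀ x ∈ S, ∀ y ∈ S, Relation.ReflTransGen O x y)
    (hmax : ∀ x, (∀ y ∈ S, Relation.ReflTransGen O x y ∧ Relation.ReflTransGen O y x) → x ∈ S)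
    (hmono : ∀ x ∈ S, ∀ y ∈ S, O x y → lam x y = t₁)
    (v w : V) (hv : v ∈ S) (hw : w ∉ S) (hvw : O v w)
    (hlab : lam v w = t₂) (ht : t₁ < t₂) :
    ∀ u ∈ S, u ≠ v → O u w ∧ lam u w = t₂ := by
  obtain ⟨horient, htto⟩ := h
  -- aux: propagation of a lower bound on the label to w backwards along paths in S
  have aux : ∀ (L : ℕ), t₁ < L → ∀ (x : V), x ∈ S → O x w → L ≤ lam x w →
      ∀ (z : V), Relation.ReflTransGen O z x → z ∈ S → O z w ∧ L ≤ lam z w := by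
    intro L hL x hxS hxw hLx z hzx
    induction hzx using Relation.ReflTransGen.head_induction_on with
    | refl => intro _; exact ⟨hxw, hLx⟩
    | @head z z' hzz' hz'x ih =>
      intro hzS
      have hz'S : z' ∈ S := by
        apply hmax
        intro q hq
        exact ⟨(hz'x.trans (hconn x hxS q hq)),
          ((hconn q hq z hzS).trans (Relation.ReflTransGen.single hzz'))⟩
      obtain ⟨hz'w, hLz'⟩ := ih hz'S
      have hlt : lam z z' < lam z' w := by
        rw [hmono z hzS z' hz'S hzz']; exact lt_of_lt_of_le hL hLz'
      obtain ⟨hzw, hle⟩ := htto z z' w hzz' hz'w hlt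
      exact ⟨hzw, le_trans hLz' hle⟩
  intro u hu _
  have key : ∀ (x : V), Relation.ReflTransGen O x v → x ∈ S → O x w ∧ lam x w = t₂ := by
    intro x hxv
    induction hxv using Relation.ReflTransGen.head_induction_on with
    | refl => intro _; exact ⟨hvw, hlab⟩
    | @head x y hxy hyv ih =>
      intro hxS
      have hyS : y ∈ S := by
        apply hmax
        intro q hq
        exact ⟨(hyv.trans (hconn v hv q hq)),
          ((hconn q hq x hxS).trans (Relation.ReflTransGen.single hxy))⟩
      obtain ⟨hyw, hyl⟩ := ih hyS
      have hlt : lam x y < lam y w := by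
        rw [hmono x hxS y hyS hxy, hyl]; exact ht
      obtain ⟨hxw, hge⟩ := htto x y w hxy hyw hlt
      rw [hyl] at hge
      have hub : lam x w ≤ t₂ := by
        have := aux (lam x w) (lt_of_lt_of_le ht hge) x hxS hxw le_rfl v
          (hconn v hv x hxS) hv
        rw [hlab] at this; exact this.2
      exact ⟨hxw, le_antisymm hub hge⟩
  exact key u (hconn u hu v hv) hu
end

section
/- A proper multilabel temporal graph admits a multilabel temporal transitive orientation (MTTO) if and only if it admits a quasi-multilabel temporal transitive orientation (QMTTO). In particular, in a proper multilabel temporal graph no QMTTO can contain a directed triangle. -/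
/-- `S₁ ⪯ S₂` : some element of `S₁` is `≤` some element of `S₂`. -/
def PreLE (S₁ S₂ : Finset ℕ) : Prop := ∃ x ∈ S₁, ∃ y ∈ S₂, x ≤ y

/-- `S₁ ≺ S₂` : some element of `S₁` is `<` some element of `S₂`. -/
def PreLT (S₁ S₂ : Finset ℕ) : Prop := ∃ x ∈ S₁, ∃ y ∈ S₂, x < y

def IsMTTO {V : Type*} (G : SimpleGraph V) (lam : V → V → Finset ℕ)
    (O : V → V → Prop) : Prop :=
  IsOrientation G O ∧
    ∀ a b c, O a b → O b c → PreLE (lam a b) (lam b c) →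
      O a c ∧ ¬ PreLT (lam a c) (lam b c)

def IsQMTTO {V : Type*} (G : SimpleGraph V) (lam : V → V → Finset ℕ)
    (O : V → V → Prop) : Prop :=
  IsOrientation G O ∧
    ∀ a b c, O a b → O b c → PreLE (lam a b) (lam b c) →
      G.Adj a c ∧ ¬ PreLT (lam a c) (lam b c) ∧ (O a c ∨ O c a)

theorem stmt19 {V : Type*} [Fintype V] (G : SimpleGraph V) (lam : V → V → Finset ℕ)
    (hsym : ∀ a b, lam a b = lam b a)
    (hne : ∀ a b, G.Adj a b → (lam a b).Nonempty)
    (hproper : ∀ a b c, G.Adj b a → G.Adj b c → a ≠ c → Disjoint (lam b a) (lam b c)) :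
    ((∃ O : V → V → Prop, IsMTTO G lam O) ↔ (∃ O : V → V → Prop, IsQMTTO G lam O)) ∧
      (∀ O : V → V → Prop, IsQMTTO G lam O → ¬ ∃ a b c, O a b ∧ O b c ∧ O c a) := by
  have key : ∀ O : V → V → Prop, IsQMTTO G lam O → ¬ ∃ a b c, O a b ∧ O b c ∧ O c a := by
    rintro O ⟨⟨hOadj, _⟩, hQ⟩ ⟨a, b, c, hab, hbc, hca⟩
    have Aab := hOadj _ _ hab
    have Abc := hOadj _ _ hbc
    have Aca := hOadj _ _ hca
    obtain ⟨p, hp⟩ := hne _ _ Aab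
    obtain ⟨q, hq⟩ := hne _ _ Abc
    obtain ⟨r, hr⟩ := hne _ _ Aca
    -- step: corner condition gives strict domination
    have step : ∀ x y z : V, O x y → O y z → O z x →
        PreLE (lam x y) (lam y z) → ∀ u ∈ lam z x, ∀ v ∈ lam y z, v < u := by
      intro x y z hxy hyz hzx hle u hu v hv
      obtain ⟨_, hnlt, _⟩ := hQ x y z hxy hyz hle
      have hd : Disjoint (lam z x) (lam z y) :=
        hproper x z y (hOadj _ _ hzx) ((hOadj _ _ hyz).symm)
          (G.ne_of_adj (hOadj _ _ hxy))
      have hu' : u ∈ lam x z := by rw [hsym]; exact hu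
      have hv' : v ∈ lam z y := by rw [hsym]; exact hv
      have hle' : ¬ u < v := fun h => hnlt ⟨u, hu', v, hv, h⟩
      have hneq : v ≠ u := fun h => (Finset.disjoint_left.mp hd hu) (h ▸ hv')
      omega
    -- case analysis on corner PreLE conditions
    by_cases h1 : PreLE (lam a b) (lam b c)
    · have g1 := step a b c hab hbc hca h1
      have h2 : PreLE (lam b c) (lam c a) := ⟨q, hq, r, hr, le_of_lt (g1 r hr q hq)⟩
      have g2 := step b c a hbc hca hab h2
      have h3 : PreLE (lam c a) (lam a b) := ⟨r, hr, p, hp, le_of_lt (g2 p hp r hr)⟩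
      have g3 := step c a b hca hab hbc h3
      have t1 := g1 r hr q hq
      have t2 := g2 p hp r hr
      have t3 := g3 q hq p hp
      omega
    · have g0 : ∀ u ∈ lam a b, ∀ v ∈ lam b c, v < u := by
        intro u hu v hv
        by_contra h
        exact h1 ⟨u, hu, v, hv, by omega⟩
      by_cases h2 : PreLE (lam b c) (lam c a)
      · have g2 := step b c a hbc hca hab h2
        have h3 : PreLE (lam c a) (lam a b) := ⟨r, hr, p, hp, le_of_lt (g2 p hp r hr)⟩
        have g3 := step c a b hca hab hbc h3
        have t1 := g0 p hp q hq
        have t2 := g3 q hq p hp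
        omega
      · have g0' : ∀ u ∈ lam b c, ∀ v ∈ lam c a, v < u := by
          intro u hu v hv
          by_contra h
          exact h2 ⟨u, hu, v, hv, by omega⟩
        have h3 : PreLE (lam c a) (lam a b) :=
          ⟨r, hr, p, hp, by have := g0' q hq r hr; have := g0 p hp q hq; omega⟩
        have g3 := step c a b hca hab hbc h3
        have t1 := g0 p hp q hq
        have t2 := g3 q hq p hp
        omega
  refine ⟨⟨?_, ?_⟩, key⟩
  · rintro ⟨O, hOr, hM⟩
    exact ⟨O, hOr, fun a b c hab hbc hle =>
      ⟨hOr.1 _ _ (hM a b c hab hbc hle).1, (hM a b c hab hbc hle).2,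
        Or.inl (hM a b c hab hbc hle).1⟩⟩
  · rintro ⟨O, hQ⟩
    refine ⟨O, hQ.1, fun a b c hab hbc hle => ?_⟩
    obtain ⟨hadj, hnlt, hor⟩ := hQ.2 a b c hab hbc hle
    rcases hor with h | h
    · exact ⟨h, hnlt⟩
    · exact absurd ⟨a, b, c, hab, hbc, h⟩ (key O hQ)
end
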